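/- For every integer k ≥ 1, every 1 ≤ q ≤ k and every n ≥ 0, F_k^q(n) = Σ_{p ∈ D_k(n)} A_{k, p ⊖ q}, where ⊖ is truncated subtraction on ℕ and F_k^q is the q-fold iterate. In particular F_k(n) = Σ_{p ∈ D_k(n)} A_{k, p ⊖ 1}. -/

import Mathlib

/-- Fuel-limited version of Hofstadter's recursion:
`Fa k fuel n` equals `F_k n` whenever `fuel ≥ n`. -/
def Fa (k : ℕ) : ℕ → ℕ → ℕ
  | 0, _ => 0
  | _ + 1, 0 => 0
  | fuel + 1, n + 1 => (n + 1) - (Fa k fuel)^[k] n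

/-- Hofstadter's function `F_k` : `F k 0 = 0` and `F k n = n - (F k)^[k] (n-1)`
for `n ≥ 1` (since `F_k m ≤ m`, the fuel `n` is always sufficient). -/
def F (k : ℕ) (n : ℕ) : ℕ := Fa k n n

/-- The function `L_k n = n + (F k)^[k-1] n`. -/
def L (k : ℕ) (n : ℕ) : ℕ := n + (F k)^[k - 1] n

/-- The Fibonacci-like sequence `A_{k,p}` : `A k p = p+1` for `p < k`,
and `A k p = A k (p-1) + A k (p-k)` for `p ≥ k`.
(The `max k 1` only makes termination evident; in all statements `k ≥ 1`.) -/
def A (k : ℕ) : ℕ → ℕ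
  | 0 => 1
  | p + 1 => if p + 1 < k then p + 2 else A k p + A k (p + 1 - max k 1)
termination_by p => p
decreasing_by all_goals omega

/-- `D` is a canonical `k`-decomposition of `n` : distinct elements are at
distance at least `k`, and the corresponding `A`-numbers sum to `n`. -/
def IsCanonDecomp (k n : ℕ) (D : Finset ℕ) : Prop :=
  (∀ p ∈ D, ∀ q ∈ D, p ≠ q → k ≤ Nat.dist p q) ∧ ∑ p ∈ D, A k p = n

/-!
Strong induction on `n`, with an inner induction on the number of iterations. Lowering every index
of a canonical decomposition `D` of `n` by `j < k` gives a decomposition `{p₀} ∪ E` of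
`F_k^j n` that is canonical except that `p₀` may be too close to `E`. Since `A_{p₀} - 1` has the
canonical decomposition `{p₀ - 1, p₀ - 1 - k, …}`, the number `m = F_k^j n - 1` has a genuinely
canonical decomposition, so the induction hypothesis computes `F_k^k m`, and
`F_k (m + 1) = m + 1 - F_k^k m` reduces, by `A_{p-1} + A_{p-k} = A_p`, to the sum over
`{p₀} ∪ E` with indices lowered by one.
-/

theorem Set.EqOn.iterate {α : Type*} {f g : α → α} {s : Set α} (hf : Set.MapsTo f s s)
    (h : Set.EqOn f g s) : ∀ n, Set.EqOn f^[n] g^[n] s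
  | 0 => fun _ _ => rfl
  | n + 1 => fun x hx => by
    rw [Function.iterate_succ_apply, Function.iterate_succ_apply, ← h hx]
    exact Set.EqOn.iterate hf h n (hf hx)

section Recursion

variable {k : ℕ}

theorem Fa_le (fuel n : ℕ) : Fa k fuel n ≤ n := by
  cases fuel <;> cases n <;> simp only [Fa] <;> omega

theorem mapsTo_Fa_Iic (fuel m : ℕ) : Set.MapsTo (Fa k fuel) (Set.Iic m) (Set.Iic m) :=
  fun x hx => (Fa_le fuel x).trans hx

theorem Fa_eq_F {n fuel : ℕ} (h : n ≤ fuel) : Fa k fuel n = F k n := by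
  induction n using Nat.strong_induction_on generalizing fuel with
  | _ n ih =>
    obtain _ | m := n
    · cases fuel <;> rfl
    obtain ⟨f, rfl⟩ : ∃ f, fuel = f + 1 := ⟨fuel - 1, by omega⟩
    have hf : Set.EqOn (Fa k f) (Fa k m) (Set.Iic m) := fun x (hx : x ≤ m) => by
      rw [ih x (by omega) (by omega), ih x (by omega) hx]
    show m + 1 - (Fa k f)^[k] m = m + 1 - (Fa k m)^[k] m
    rw [hf.iterate (mapsTo_Fa_Iic f m) k Set.self_mem_Iic]

theorem F_le (n : ℕ) : F k n ≤ n := Fa_le n n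

theorem iterate_F_le (j n : ℕ) : (F k)^[j] n ≤ n := by
  induction j with
  | zero => rfl
  | succ j ih => exact (Function.iterate_succ_apply' (F k) j n).trans_le ((F_le _).trans ih)

theorem F_succ (n : ℕ) : F k (n + 1) = n + 1 - (F k)^[k] n := by
  have h : Set.EqOn (Fa k n) (F k) (Set.Iic n) := fun x (hx : x ≤ n) => Fa_eq_F hx
  show n + 1 - (Fa k n)^[k] n = _
  rw [h.iterate (mapsTo_Fa_Iic n n) k Set.self_mem_Iic]

theorem A_of_lt {p : ℕ} (h : p < k) : A k p = p + 1 := by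
  cases p with
  | zero => simp [A]
  | succ m => rw [A, if_pos h]

theorem A_sub_one_add_A_sub (hk : 1 ≤ k) {p : ℕ} (hp : 1 ≤ p) :
    A k (p - 1) + A k (p - k) = A k p := by
  obtain ⟨m, rfl⟩ : ∃ m, p = m + 1 := ⟨p - 1, by omega⟩
  rw [A]
  split_ifs with h
  · rw [Nat.add_sub_cancel, A_of_lt (by omega), show m + 1 - k = 0 by omega, A]
  · rw [max_eq_left hk, Nat.add_sub_cancel]

end Recursion

/-- `decompPred k p` is the canonical decomposition `{p-1, p-1-k, p-1-2k, …}` of `A k p - 1`. -/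
def decompPred (k : ℕ) : ℕ → Finset ℕ
  | 0 => ∅
  | p + 1 => insert p (decompPred k (p - (k - 1)))

def IsSeparated (k : ℕ) (D : Finset ℕ) : Prop :=
  ∀ p ∈ D, ∀ q ∈ D, p < q → p + k ≤ q

section Decomposition

variable {k : ℕ}

theorem IsCanonDecomp.isSeparated {n : ℕ} {D : Finset ℕ} (hD : IsCanonDecomp k n D) :
    IsSeparated k D := fun p hp q hq hpq => by
  have := hD.1 p hp q hq hpq.ne
  rw [Nat.dist_eq_sub_of_le hpq.le] at this
  omega

theorem IsSeparated.union {S T : Finset ℕ} (hS : IsSeparated k S) (hT : IsSeparated k T)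
    (hST : ∀ a ∈ S, ∀ b ∈ T, a + k ≤ b) : IsSeparated k (S ∪ T) := by
  intro p hp q hq hpq
  rcases Finset.mem_union.1 hp with hp | hp <;> rcases Finset.mem_union.1 hq with hq | hq
  · exact hS p hp q hq hpq
  · exact hST p hp q hq
  · have := hST q hq p hp; omega
  · exact hT p hp q hq hpq

theorem IsSeparated.image_sub {D : Finset ℕ} (hD : IsSeparated k D) {j : ℕ}
    (hj : ∀ p ∈ D, j ≤ p) : IsSeparated k (D.image (· - j)) := by
  simp only [IsSeparated, Finset.mem_image]
  rintro _ ⟨p, hp, rfl⟩ _ ⟨q, hq, rfl⟩ hpq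
  have := hj p hp
  have := hD p hp q hq (by omega)
  omega

theorem sum_image_sub {D : Finset ℕ} {j : ℕ} (hj : ∀ p ∈ D, j ≤ p) (f : ℕ → ℕ) :
    ∑ p ∈ D.image (· - j), f p = ∑ p ∈ D, f (p - j) :=
  Finset.sum_image fun p hp q hq h => by have := hj p hp; have := hj q hq; omega

theorem lt_of_mem_decompPred {p c : ℕ} (hc : c ∈ decompPred k p) : c < p := by
  induction p using decompPred.induct k with
  | case1 => simp [decompPred] at hc
  | case2 p ih =>
    simp only [decompPred, Finset.mem_insert] at hc
    rcases hc with rfl | hc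
    · omega
    · have := ih hc; omega

theorem isSeparated_decompPred (p : ℕ) : IsSeparated k (decompPred k p) := by
  induction p using decompPred.induct k with
  | case1 => simp [IsSeparated, decompPred]
  | case2 p ih =>
    simp only [decompPred]
    rw [← Finset.union_singleton]
    refine ih.union (by simp [IsSeparated]) fun a ha b hb => ?_
    have := lt_of_mem_decompPred ha
    rw [Finset.mem_singleton.1 hb]
    omega

theorem sum_A_decompPred (hk : 1 ≤ k) (p : ℕ) : ∑ c ∈ decompPred k p, A k c + 1 = A k p := by
  induction p using decompPred.induct k with
  | case1 => simp [decompPred, A]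
  | case2 p ih =>
    have hp : p ∉ decompPred k (p - (k - 1)) := fun h =>
      absurd (lt_of_mem_decompPred h) (by omega)
    have hrec := A_sub_one_add_A_sub hk (p := p + 1) (by omega)
    rw [Nat.add_sub_cancel, show p + 1 - k = p - (k - 1) by omega] at hrec
    simp only [decompPred, Finset.sum_insert hp, Nat.succ_eq_add_one]
    omega

theorem sum_A_sub_decompPred (hk : 1 ≤ k) (p : ℕ) :
    ∑ c ∈ decompPred k p, A k (c - k) + A k (p - 1) = A k p := by
  induction p using decompPred.induct k with
  | case1 => simp [decompPred, A]
  | case2 p ih =>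
    have hp : p ∉ decompPred k (p - (k - 1)) := fun h =>
      absurd (lt_of_mem_decompPred h) (by omega)
    have hrec := A_sub_one_add_A_sub hk (p := p + 1) (by omega)
    rw [Nat.add_sub_cancel, show p + 1 - k = p - (k - 1) by omega] at hrec
    rw [show p - (k - 1) - 1 = p - k by omega] at ih
    simp only [decompPred, Finset.sum_insert hp, Nat.succ_eq_add_one, Nat.add_sub_cancel]
    omega

end Decomposition

section Iterates

variable {k n : ℕ}

/-- A canonical decomposition with all indices lowered by some `j < k` has this shape: only its
smallest index can come closer than `k` to the others. -/
theorem F_A_add_sum_A (hk : 1 ≤ k)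
    (ih : ∀ m < n, ∀ D, IsSeparated k D → ∑ p ∈ D, A k p = m →
      (F k)^[k] m = ∑ p ∈ D, A k (p - k))
    {p₀ : ℕ} {E : Finset ℕ} (hE : IsSeparated k E)
    (hp₀E : ∀ q ∈ E, p₀ < q ∧ (p₀ = 0 ∨ p₀ + k ≤ q + 1)) (hn : A k p₀ + ∑ p ∈ E, A k p ≤ n) :
    F k (A k p₀ + ∑ p ∈ E, A k p) = A k (p₀ - 1) + ∑ p ∈ E, A k (p - 1) := by
  have hdisj : Disjoint (decompPred k p₀) E := Finset.disjoint_left.2 fun a ha hb =>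
    absurd (hp₀E a hb).1 (lt_of_mem_decompPred ha).not_gt
  have hsep : IsSeparated k (decompPred k p₀ ∪ E) :=
    (isSeparated_decompPred p₀).union hE fun a ha b hb => by
      have := lt_of_mem_decompPred ha
      rcases (hp₀E b hb).2 with h | h <;> omega
  have hpred : ∑ p ∈ decompPred k p₀ ∪ E, A k p + 1 = A k p₀ + ∑ p ∈ E, A k p := by
    rw [Finset.sum_union hdisj, ← sum_A_decompPred hk p₀]
    ring
  have hiter : (F k)^[k] (∑ p ∈ decompPred k p₀ ∪ E, A k p) =
      ∑ p ∈ decompPred k p₀, A k (p - k) + ∑ p ∈ E, A k (p - k) := by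
    rw [ih _ (by omega) _ hsep rfl, Finset.sum_union hdisj]
  have hrecE : ∑ p ∈ E, A k (p - 1) + ∑ p ∈ E, A k (p - k) = ∑ p ∈ E, A k p := by
    rw [← Finset.sum_add_distrib]
    exact Finset.sum_congr rfl fun p hp => A_sub_one_add_A_sub hk (by have := (hp₀E p hp).1; omega)
  have hrec₀ := sum_A_sub_decompPred hk p₀
  rw [← hpred, F_succ, hiter]
  omega

theorem F_sum_A_sub (hk : 1 ≤ k)
    (ih : ∀ m < n, ∀ D, IsSeparated k D → ∑ p ∈ D, A k p = m →
      (F k)^[k] m = ∑ p ∈ D, A k (p - k))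
    {D : Finset ℕ} (hD : IsSeparated k D) {j : ℕ} (hj : j < k)
    (hn : ∑ p ∈ D, A k (p - j) ≤ n) :
    F k (∑ p ∈ D, A k (p - j)) = ∑ p ∈ D, A k (p - (j + 1)) := by
  rcases D.eq_empty_or_nonempty with rfl | hne
  · rfl
  set p₀ := D.min' hne
  have hp₀ : p₀ ∈ D := D.min'_mem hne
  have hE : ∀ q ∈ D.erase p₀, p₀ + k ≤ q := fun q hq =>
    hD _ hp₀ _ (Finset.mem_of_mem_erase hq)
      ((D.min'_le _ (Finset.mem_of_mem_erase hq)).lt_of_ne (Finset.ne_of_mem_erase hq).symm)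
  have hjE : ∀ q ∈ D.erase p₀, j ≤ q := fun q hq => by have := hE q hq; omega
  have hsepE : IsSeparated k (D.erase p₀) := fun p hp q hq =>
    hD p (Finset.mem_of_mem_erase hp) q (Finset.mem_of_mem_erase hq)
  have key := F_A_add_sum_A hk ih (hsepE.image_sub hjE) (p₀ := p₀ - j)
    (by simp only [Finset.mem_image]; rintro _ ⟨q, hq, rfl⟩; have := hE q hq; omega)
    (by rw [sum_image_sub hjE]; exact (Finset.add_sum_erase D _ hp₀).trans_le hn)
  rw [sum_image_sub hjE, sum_image_sub hjE] at key
  rw [← Finset.add_sum_erase D _ hp₀, ← Finset.add_sum_erase D _ hp₀, key]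
  simp only [Nat.sub_sub]

theorem iterate_F_eq_sum (hk : 1 ≤ k) {D : Finset ℕ} (hD : IsSeparated k D)
    (hn : ∑ p ∈ D, A k p = n) {j : ℕ} (hj : j ≤ k) :
    (F k)^[j] n = ∑ p ∈ D, A k (p - j) := by
  induction n using Nat.strong_induction_on generalizing D j with
  | _ n ih =>
  induction j with
  | zero => simp [hn]
  | succ j ihj =>
    rw [Function.iterate_succ_apply', ihj (by omega)]
    exact F_sum_A_sub hk (fun m hm D hD hD' => ih m hm hD hD' le_rfl) hD (by omega)
      (ihj (by omega) ▸ iterate_F_le j n)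

end Iterates

theorem F_iterate_eq_sum_shifted_general (k : ℕ) (hk : 1 ≤ k) (q : ℕ)
    (hqk : q ≤ k) (n : ℕ) (D : Finset ℕ) (hD : IsCanonDecomp k n D) :
    (F k)^[q] n = ∑ p ∈ D, A k (p - q) ∧
    F k n = ∑ p ∈ D, A k (p - 1) :=
  ⟨iterate_F_eq_sum hk hD.isSeparated hD.2 hqk,
    by simpa using iterate_F_eq_sum hk hD.isSeparated hD.2 hk⟩

/-- For `1 ≤ q ≤ k`, `F_k^q n = Σ_{p ∈ D_k(n)} A_{k, p ⊖ q}`; in particular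
`F_k n = Σ_{p ∈ D_k(n)} A_{k, p ⊖ 1}`. -/
theorem F_iterate_eq_sum_shifted (k : ℕ) (hk : 1 ≤ k) (q : ℕ) (hq : 1 ≤ q)
    (hqk : q ≤ k) (n : ℕ) (D : Finset ℕ) (hD : IsCanonDecomp k n D) :
    (F k)^[q] n = ∑ p ∈ D, A k (p - q) ∧
    F k n = ∑ p ∈ D, A k (p - 1) :=
  F_iterate_eq_sum_shifted_general k hk q hqk n D hD
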